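/- The commutator subgroup of the group ⟨a, b | ab = (ba)²⟩ is abelian but not finitely generated. -/

import Mathlib

/-!
With `t = ba` the relation reads `a t a⁻¹ = t²`, so the group is generated by `a` and `t` subject
to the Baumslag–Solitar relation. The conjugates `aⁿ t a⁻ⁿ` are powers of one another, hence
commute; every conjugate of `t` is of this form, so the normal closure of `t` is abelian, and it
contains the commutator subgroup since the quotient by it is cyclic, generated by the image of `a`.

The affine representation `a ↦ (x ↦ 2x)`, `b ↦ (x ↦ x/2 + 1)` of the group over `ℚ` sends `t` to
the translation by `1`, hence the commutator subgroup to translations, and `a⁻ⁿ t aⁿ` to the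
translation by `2⁻ⁿ`. A finitely generated subgroup of `ℚ` has bounded denominators, so the
commutator subgroup is not finitely generated.
-/

/-- Relation `ab = baba`, generators `a = of 0`, `b = of 1`. -/
def relsStmt8 : Set (FreeGroup (Fin 2)) :=
  let a := FreeGroup.of (0 : Fin 2)
  let b := FreeGroup.of (1 : Fin 2)
  {a * b * (b * a * b * a)⁻¹}

open Subgroup

theorem commutator_le_normalClosure_of_closure_pair_eq_top {G : Type*} [Group G] {a t : G}
    (hgen : closure {a, t} = ⊤) : commutator G ≤ normalClosure {t} := by
  refine Normal.commutator_le_of_self_sup_commutative_eq_top (H := zpowers a) ?_ inferInstance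
  rw [eq_top_iff, ← hgen, closure_le, Set.insert_subset_iff, Set.singleton_subset_iff]
  exact ⟨mem_sup_right (mem_zpowers a), mem_sup_left (subset_normalClosure rfl)⟩

namespace BaumslagSolitar

variable {G : Type*} [Group G] {a t : G} {k : ℤ}

theorem conj_pow_eq_zpow_pow (h : MulAut.conj a t = t ^ k) (n : ℕ) :
    MulAut.conj (a ^ n) t = t ^ k ^ n := by
  induction n with
  | zero => simp
  | succ n ih => rw [pow_succ, map_mul, MulAut.mul_apply, h, map_zpow, ih, ← zpow_mul, pow_succ]

theorem commute_conj_zpow (h : MulAut.conj a t = t ^ k) (m n : ℤ) :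
    Commute (MulAut.conj (a ^ m) t) (MulAut.conj (a ^ n) t) := by
  wlog hmn : m ≤ n generalizing m n
  · exact (this n m (by omega)).symm
  obtain ⟨j, rfl⟩ := Int.exists_add_of_le hmn
  rw [zpow_add a, map_mul, MulAut.mul_apply, zpow_natCast, conj_pow_eq_zpow_pow h,
    map_zpow (MulAut.conj (a ^ m))]
  exact (Commute.refl (MulAut.conj (a ^ m) t)).zpow_right _

theorem exists_conj_eq_conj_zpow (h : MulAut.conj a t = t ^ k) (hgen : closure {a, t} = ⊤)
    (g : G) (n : ℤ) : ∃ m : ℤ, MulAut.conj g (MulAut.conj (a ^ n) t) = MulAut.conj (a ^ m) t := by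
  have conj_a (n : ℤ) : MulAut.conj a (MulAut.conj (a ^ n) t) = MulAut.conj (a ^ (1 + n)) t := by
    rw [zpow_add, zpow_one, map_mul, MulAut.mul_apply]
  have conj_t (n : ℤ) : MulAut.conj t (MulAut.conj (a ^ n) t) = MulAut.conj (a ^ n) t := by
    have := commute_conj_zpow h 0 n
    rw [zpow_zero, map_one, MulAut.one_apply] at this
    rw [MulAut.conj_apply, this.eq, mul_inv_cancel_right]
  have hg : g ∈ closure {a, t} := hgen ▸ mem_top g
  induction hg using closure_induction'' generalizing n with
  | mem x hx =>
    rcases hx with rfl | rfl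
    · exact ⟨1 + n, conj_a n⟩
    · exact ⟨n, conj_t n⟩
  | inv_mem x hx =>
    rcases hx with rfl | rfl
    · refine ⟨n - 1, ?_⟩
      rw [map_inv, MulAut.inv_apply, MulEquiv.symm_apply_eq, conj_a, add_sub_cancel]
    · exact ⟨n, by rw [map_inv, MulAut.inv_apply, MulEquiv.symm_apply_eq, conj_t]⟩
  | one => exact ⟨n, by simp⟩
  | mul x y _ _ hx hy =>
    obtain ⟨m, hm⟩ := hy n
    obtain ⟨l, hl⟩ := hx m
    exact ⟨l, by rw [map_mul, MulAut.mul_apply, hm, hl]⟩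

theorem isMulCommutative_normalClosure (h : MulAut.conj a t = t ^ k)
    (hgen : closure {a, t} = ⊤) : IsMulCommutative (normalClosure {t}) := by
  have mem_range (x : G) (hx : x ∈ Group.conjugatesOfSet {t}) :
      ∃ m : ℤ, x = MulAut.conj (a ^ m) t := by
    obtain ⟨_, rfl, hconj⟩ := Group.mem_conjugatesOfSet_iff.1 hx
    obtain ⟨g, rfl⟩ := isConj_iff.1 hconj
    obtain ⟨m, hm⟩ := exists_conj_eq_conj_zpow h hgen g 0
    rw [zpow_zero, map_one, MulAut.one_apply, MulAut.conj_apply] at hm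
    exact ⟨m, hm⟩
  refine isMulCommutative_closure fun x hx y hy => ?_
  obtain ⟨m, rfl⟩ := mem_range x hx
  obtain ⟨n, rfl⟩ := mem_range y hy
  exact commute_conj_zpow h m n

end BaumslagSolitar

namespace AffineEquiv

variable {k V P : Type*} [Ring k] [AddCommGroup V] [Module k V] [AddTorsor V P]

def translationHom (p : P) :
    (linearHom : (P ≃ᵃ[k] P) →* V ≃ₗ[k] V).ker →* Multiplicative V where
  toFun f := .ofAdd ((f : P ≃ᵃ[k] P) p -ᵥ p)
  map_one' := by simp
  map_mul' f g := by
    have hf : (f : P ≃ᵃ[k] P).linear = LinearEquiv.refl k V := f.2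
    rw [← ofAdd_add, Subgroup.coe_mul, coe_mul, Function.comp_apply,
      ← vsub_vadd ((g : P ≃ᵃ[k] P) p) p, map_vadd, hf, LinearEquiv.refl_apply, vadd_vsub_assoc,
      vadd_vsub, add_comm]

end AffineEquiv

namespace Rat

def denDvdAddSubgroup (D : ℕ) : AddSubgroup ℚ where
  carrier := {q | q.den ∣ D}
  zero_mem' := by simp
  add_mem' {p q} hp hq := (add_den_dvd_lcm p q).trans (Nat.lcm_dvd hp hq)
  neg_mem' := by simp

theorem exists_den_dvd_of_fg {H : AddSubgroup ℚ} (hH : H.FG) :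
    ∃ D ≠ 0, ∀ q ∈ H, q.den ∣ D := by
  obtain ⟨S, rfl⟩ := hH
  refine ⟨∏ q ∈ S, q.den, Finset.prod_ne_zero_iff.2 fun q _ => q.den_ne_zero, fun q hq => ?_⟩
  exact (AddSubgroup.closure_le (denDvdAddSubgroup _)).2
    (fun s hs => Finset.dvd_prod_of_mem _ hs) hq

theorem not_fg_of_forall_inv_two_pow_mem {H : AddSubgroup ℚ}
    (h : ∀ n : ℕ, ((2 : ℚ) ^ n)⁻¹ ∈ H) : ¬H.FG := by
  intro hH
  obtain ⟨D, hD, hdvd⟩ := exists_den_dvd_of_fg hH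
  have hden : ((2 : ℚ) ^ D)⁻¹.den = 2 ^ D := by
    exact_mod_cast inv_natCast_den_of_pos (Nat.two_pow_pos D)
  exact Nat.lt_two_pow_self.not_ge (Nat.le_of_dvd (Nat.pos_of_ne_zero hD) (hden ▸ hdvd _ (h D)))

end Rat

theorem mul_eq_mul_mul_mul_iff_conj {M : Type*} [Group M] (x y : M) :
    x * y = y * x * y * x ↔ MulAut.conj x (y * x) = (y * x) ^ (2 : ℤ) := by
  rw [MulAut.conj_apply, ← mul_assoc, mul_inv_cancel_right, zpow_two, ← mul_assoc]

namespace OneRelator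

open scoped commutatorElement

local notation "G" => PresentedGroup relsStmt8

def a : G := PresentedGroup.of 0
def b : G := PresentedGroup.of 1
def t : G := b * a

theorem a_mul_b : a * b = b * a * b * a := by
  have := PresentedGroup.mk_eq_mk_of_mul_inv_mem (rels := relsStmt8) (x := .of 0 * .of 1)
    (y := .of 1 * .of 0 * .of 1 * .of 0) rfl
  rwa [map_mul, map_mul, map_mul, map_mul] at this

theorem conj_a_t : MulAut.conj a t = t ^ (2 : ℤ) :=
  (mul_eq_mul_mul_mul_iff_conj a b).1 a_mul_b

theorem closure_a_t : closure {a, t} = ⊤ := by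
  rw [eq_top_iff, ← PresentedGroup.closure_range_of, closure_le]
  rintro _ ⟨i, rfl⟩
  fin_cases i
  · exact subset_closure (Set.mem_insert _ _)
  · show b ∈ _
    rw [← mul_inv_cancel_right b a]
    exact mul_mem (subset_closure (by simp [t])) (inv_mem (subset_closure (by simp)))

theorem t_mem_commutator : t ∈ commutator G := by
  have : t = ⁅a⁻¹, b⁻¹⁆ := by
    rw [commutatorElement_def, inv_inv, inv_inv, mul_assoc, a_mul_b, t]
    group
  exact this ▸ commutator_mem_commutator (mem_top _) (mem_top _)

theorem isMulCommutative_commutator : IsMulCommutative (commutator G) := by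
  have := BaumslagSolitar.isMulCommutative_normalClosure conj_a_t closure_a_t
  have hle := commutator_le_normalClosure_of_closure_pair_eq_top closure_a_t
  exact .of_setLike_mul_comm fun x hx y hy => setLike_mul_comm (hle hx) (hle hy)

def doubling : ℚ ≃ᵃ[ℚ] ℚ := AffineEquiv.homothetyUnitsMulHom 0 (Units.mk0 2 two_ne_zero)

def shift : ℚ ≃ᵃ[ℚ] ℚ := AffineEquiv.constVAdd ℚ ℚ 1

theorem doubling_zpow_apply (n : ℤ) (x : ℚ) : (doubling ^ n) x = 2 ^ n * x := by
  simp [doubling, ← map_zpow, AffineMap.homothety_apply, Units.val_zpow_eq_zpow_val]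

theorem conj_doubling_shift : MulAut.conj doubling shift = shift ^ (2 : ℤ) := by
  ext x
  have h := doubling_zpow_apply (-1) x
  rw [zpow_neg_one] at h
  simp only [MulAut.conj_apply, AffineEquiv.coe_mul, Function.comp_apply, h]
  rw [← zpow_one doubling, doubling_zpow_apply, shift, ← AffineEquiv.constVAdd_zsmul]
  simp only [AffineEquiv.constVAdd_apply, vadd_eq_add, zsmul_eq_mul]
  ring

def toAffine : G →* ℚ ≃ᵃ[ℚ] ℚ :=
  PresentedGroup.toGroup (f := ![doubling, shift * doubling⁻¹]) <| by
    rintro _ rfl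
    simp only [map_mul, map_inv, FreeGroup.lift_apply_of, Matrix.cons_val_zero,
      Matrix.cons_val_one, mul_inv_eq_one]
    exact (mul_eq_mul_mul_mul_iff_conj _ _).2
      (by rw [inv_mul_cancel_right]; exact conj_doubling_shift)

theorem toAffine_a : toAffine a = doubling := PresentedGroup.toGroup.of _

theorem toAffine_t : toAffine t = shift := by
  rw [t, map_mul, toAffine_a, b, toAffine, PresentedGroup.toGroup.of]
  simp

theorem toAffine_conj_zpow_a_t_apply_zero (n : ℤ) :
    toAffine (MulAut.conj (a ^ n) t) 0 = 2 ^ n := by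
  rw [MulAut.conj_apply, map_mul, map_mul, map_inv, map_zpow, toAffine_a, toAffine_t, ← zpow_neg]
  simp only [AffineEquiv.coe_mul, Function.comp_apply, doubling_zpow_apply, shift,
    AffineEquiv.constVAdd_apply, vadd_eq_add]
  simp

theorem commutator_le_comap_toAffine_ker :
    commutator G ≤ (AffineEquiv.linearHom.ker).comap toAffine :=
  (commutator_le_normalClosure_of_closure_pair_eq_top closure_a_t).trans <|
    normalClosure_le_normal <| by
      rintro _ rfl
      simp only [SetLike.mem_coe, mem_comap, MonoidHom.mem_ker, toAffine_t, shift]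
      rfl

def commutatorTranslation : commutator G →* Multiplicative ℚ :=
  (AffineEquiv.translationHom (0 : ℚ)).comp <|
    (toAffine.comp (commutator G).subtype).codRestrict _ fun x =>
      commutator_le_comap_toAffine_ker x.2

theorem commutatorTranslation_apply (x : commutator G) :
    commutatorTranslation x = .ofAdd (toAffine x 0) :=
  congrArg Multiplicative.ofAdd (sub_zero (toAffine x 0))

theorem not_fg_commutator : ¬(commutator G).FG := by
  intro hFG
  have : Group.FG (commutator G) := (Group.fg_iff_subgroup_fg _).2 hFG
  refine Rat.not_fg_of_forall_inv_two_pow_mem (fun n => ?_) ((AddGroup.fg_iff_addSubgroup_fg _).1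
    (AddGroup.fg_range commutatorTranslation.toAdditiveLeft))
  have hmem : MulAut.conj (a ^ (-n : ℤ)) t ∈ commutator G :=
    (inferInstance : (commutator G).Normal).conj_mem _ t_mem_commutator (a ^ (-n : ℤ))
  refine ⟨.ofMul ⟨_, hmem⟩, ?_⟩
  rw [MonoidHom.toAdditiveLeft_apply_apply, toMul_ofMul, commutatorTranslation_apply, toAdd_ofAdd,
    toAffine_conj_zpow_a_t_apply_zero, zpow_neg, zpow_natCast]

end OneRelator

/-- The commutator subgroup of `⟨a, b | ab = (ba)²⟩` is abelian but not finitely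
generated. -/
theorem stmt_8 :
    (∀ x y : commutator (PresentedGroup relsStmt8), x * y = y * x) ∧
    ¬ (commutator (PresentedGroup relsStmt8)).FG :=
  ⟨OneRelator.isMulCommutative_commutator.is_comm.comm, OneRelator.not_fg_commutator⟩
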